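/- arXiv:2512.08660 — 3 statements merged into one kernel-verified Lean document; each statement's English description precedes it below -/
import Mathlib

section
/- Let q > 0, and let Z : ℝ × ℝ → ℝ be differentiable satisfying ∂Z/∂t + v(t)·∂Z/∂x = r(x,t)·q with Z(x,0) = 0, where v is continuous and r is continuous. Let φ : ℝ → ℝ be differentiable with 0 < φ(y) < q for all y, and set V(t) = ∫₀ᵗ v. Then u(x,t) = q·φ(x−V(t)) / (φ(x−V(t)) + (q − φ(x−V(t)))·exp(−Z(x,t))) satisfies the PDE ∂u/∂t + v(t)·∂u/∂x = r(x,t)·(q − u)·u, and u(x,0) = φ(x). -/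
/-!
Write `u = G(A, Z)` with `A(x,t) = φ(x - V t)` and `G(a, z) = q a / (a + (q - a) e^{-z})`.
The transport operator `L = ∂ₜ + v(t) ∂ₓ` obeys the chain rule, `A` is constant along the
characteristics (`L A = 0`) and `L Z = r q`, so `L u = ∂_z G · r q`. Finally `∂_z G = (q - G) G / q`,
the logistic law in the variable `z`.
-/

open Real

noncomputable def logisticProfile (q a z : ℝ) : ℝ :=
  q * a / (a + (q - a) * exp (-z))

lemma logisticProfile_zero {q : ℝ} (hq : q ≠ 0) (a : ℝ) : logisticProfile q a 0 = a := by
  simp [logisticProfile, div_eq_iff hq, mul_comm]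

lemma hasDerivAt_logisticProfile {q t f' g' : ℝ} {f g : ℝ → ℝ}
    (hf : HasDerivAt f f' t) (hg : HasDerivAt g g' t) (hpos : 0 < f t) (hlt : f t < q) :
    HasDerivAt (fun s => logisticProfile q (f s) (g s))
      (q ^ 2 * exp (-g t) / (f t + (q - f t) * exp (-g t)) ^ 2 * f'
        + (q - logisticProfile q (f t) (g t)) * logisticProfile q (f t) (g t) / q * g') t := by
  have hE := exp_pos (-g t)
  have hden : f t + (q - f t) * exp (-g t) ≠ 0 := by
    have : 0 < (q - f t) * exp (-g t) := mul_pos (by linarith) hE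
    linarith
  have hq : q ≠ 0 := by linarith
  have hD : HasDerivAt (fun s => f s + (q - f s) * exp (-g s))
      (f' + (-f' * exp (-g t) + (q - f t) * (exp (-g t) * -g'))) t :=
    hf.add ((hf.const_sub q).mul hg.neg.exp)
  refine ((hf.const_mul q).div hD hden).congr_deriv ?_
  unfold logisticProfile
  field_simp
  ring

theorem stmt1_general (q : ℝ) (v : ℝ → ℝ) (r : ℝ → ℝ → ℝ)
    (hv : Continuous v)
    (Z : ℝ → ℝ → ℝ) (hZdiff : Differentiable ℝ fun p : ℝ × ℝ => Z p.1 p.2)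
    (hZpde : ∀ x t, deriv (fun s => Z x s) t + v t * deriv (fun y => Z y t) x = r x t * q)
    (hZ0 : ∀ x, Z x 0 = 0)
    (φ : ℝ → ℝ) (hφ : Differentiable ℝ φ) (hφq : ∀ y, 0 < φ y ∧ φ y < q)
    (V : ℝ → ℝ) (hV : ∀ t, V t = ∫ τ in (0:ℝ)..t, v τ)
    (u : ℝ → ℝ → ℝ)
    (hu : ∀ x t, u x t =
      q * φ (x - V t) / (φ (x - V t) + (q - φ (x - V t)) * Real.exp (-(Z x t)))) :
    (∀ x t, deriv (fun s => u x s) t + v t * deriv (fun y => u y t) x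
        = r x t * (q - u x t) * u x t) ∧ (∀ x, u x 0 = φ x) := by
  have hu' : ∀ x t, u x t = logisticProfile q (φ (x - V t)) (Z x t) := hu
  have hq : q ≠ 0 := by linarith [hφq 0]
  refine ⟨fun x t => ?_, fun x => ?_⟩
  · obtain ⟨hpos, hlt⟩ := hφq (x - V t)
    have hV' : HasDerivAt V (v t) t := by
      rw [funext hV]; exact (hv.integral_hasStrictDerivAt 0 t).hasDerivAt
    have hZt : HasDerivAt (fun s => Z x s) (deriv (fun s => Z x s) t) t :=
      (hZdiff.comp (differentiable_const x |>.prodMk differentiable_id) t).hasDerivAt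
    have hZx : HasDerivAt (fun y => Z y t) (deriv (fun y => Z y t) x) x :=
      (hZdiff.comp (differentiable_id.prodMk (differentiable_const t)) x).hasDerivAt
    have hAt : HasDerivAt (fun s => φ (x - V s)) (deriv φ (x - V t) * -v t) t :=
      (hφ (x - V t)).hasDerivAt.comp t (hV'.const_sub x)
    have hAx : HasDerivAt (fun y => φ (y - V t)) (deriv φ (x - V t) * 1) x :=
      (hφ (x - V t)).hasDerivAt.comp x ((hasDerivAt_id x).sub_const (V t))
    have hut := hasDerivAt_logisticProfile hAt hZt hpos hlt
    have hux := hasDerivAt_logisticProfile hAx hZx hpos hlt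
    simp only [hu']
    rw [hut.deriv, hux.deriv]
    linear_combination (norm := skip) (q - logisticProfile q (φ (x - V t)) (Z x t)) *
      logisticProfile q (φ (x - V t)) (Z x t) / q * hZpde x t
    field_simp
    ring
  · have hV0 : V 0 = 0 := by simp [hV]
    rw [hu', hV0, hZ0, sub_zero, logisticProfile_zero hq]

theorem stmt1 (q : ℝ) (hq : 0 < q) (v : ℝ → ℝ) (r : ℝ → ℝ → ℝ)
    (hv : Continuous v) (hr : Continuous fun p : ℝ × ℝ => r p.1 p.2)
    (Z : ℝ → ℝ → ℝ) (hZdiff : Differentiable ℝ fun p : ℝ × ℝ => Z p.1 p.2)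
    (hZpde : ∀ x t, deriv (fun s => Z x s) t + v t * deriv (fun y => Z y t) x = r x t * q)
    (hZ0 : ∀ x, Z x 0 = 0)
    (φ : ℝ → ℝ) (hφ : Differentiable ℝ φ) (hφq : ∀ y, 0 < φ y ∧ φ y < q)
    (V : ℝ → ℝ) (hV : ∀ t, V t = ∫ τ in (0:ℝ)..t, v τ)
    (u : ℝ → ℝ → ℝ)
    (hu : ∀ x t, u x t =
      q * φ (x - V t) / (φ (x - V t) + (q - φ (x - V t)) * Real.exp (-(Z x t)))) :
    (∀ x t, deriv (fun s => u x s) t + v t * deriv (fun y => u y t) x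
        = r x t * (q - u x t) * u x t) ∧ (∀ x, u x 0 = φ x) :=
  stmt1_general q v r hv Z hZdiff hZpde hZ0 φ hφ hφq V hV u hu
end

section
/- Let q > 0, let v be continuous and positive with V(t) = ∫₀ᵗ v a strictly increasing bijection of [0,∞), let g : [0,∞) → ℝ be differentiable with 0 < g(s) < q for all s, and let μ be differentiable with ∂μ/∂t + v(t)·∂μ/∂x = r(x,t)·q and μ(0,t) = 0. Then u₂(x,t) = q·g(y₂)/(g(y₂) + (q − g(y₂))·e^{−μ(x,t)}), with y₂ = V⁻¹(V(t) − x), satisfies ∂u₂/∂t + v(t)·∂u₂/∂x = r(x,t)·(q − u₂)·u₂ on {0 < x < V(t)}, and u₂(0,t) = g(t). -/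
/-!
Along a characteristic `V t - x = const` the boundary datum `g (V⁻¹ (V t - x))` is constant
while `μ` grows at rate `r q`, and the profile `m ↦ q a / (a + (q - a) e^{-m})` solves the
logistic equation `∂ₘ L = (q - L) L / q`; the chain rule then gives the PDE. At `x = 0` the foot
of the characteristic is `t` itself and `μ = 0`, so the profile returns `g t`.
-/

open Real

noncomputable def logistic (q a m : ℝ) : ℝ := q * a / (a + (q - a) * exp (-m))

theorem logistic_denom_pos {q a : ℝ} (ha : 0 < a) (haq : a < q) (m : ℝ) :
    0 < a + (q - a) * exp (-m) := by
  have : 0 < (q - a) * exp (-m) := mul_pos (sub_pos.2 haq) (exp_pos _)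
  linarith

theorem logistic_zero {q : ℝ} (hq : q ≠ 0) (a : ℝ) : logistic q a 0 = a := by
  simp only [logistic, neg_zero, exp_zero, mul_one, add_sub_cancel]
  field_simp

theorem HasDerivAt.logistic {q : ℝ} {A M : ℝ → ℝ} {A' M' t : ℝ} (hq : q ≠ 0)
    (hA : HasDerivAt A A' t) (hM : HasDerivAt M M' t)
    (hD : A t + (q - A t) * Real.exp (-M t) ≠ 0) :
    HasDerivAt (fun s => _root_.logistic q (A s) (M s))
      (q ^ 2 * Real.exp (-M t) / (A t + (q - A t) * Real.exp (-M t)) ^ 2 * A'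
        + (q - _root_.logistic q (A t) (M t)) * _root_.logistic q (A t) (M t) / q * M') t := by
  have hE : HasDerivAt (fun s => Real.exp (-M s)) (Real.exp (-M t) * -M') t := hM.neg.exp
  refine ((hA.const_mul q).div (hA.add ((hA.const_sub q).mul hE)) hD).congr_deriv ?_
  simp only [Pi.add_apply, Pi.mul_apply, _root_.logistic]
  field_simp
  ring

theorem strictMono_integral_of_pos {v : ℝ → ℝ} (hv : Continuous v) (hvpos : ∀ t, 0 < v t) :
    StrictMono fun t => ∫ τ in (0:ℝ)..t, v τ :=
  strictMono_of_hasDerivAt_pos (fun t => (hv.integral_hasStrictDerivAt 0 t).hasDerivAt) hvpos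

theorem hasDerivAt_leftInverse_of_pos {V Vinv : ℝ → ℝ} {c t : ℝ}
    (hV : HasStrictDerivAt V c t) (hc : c ≠ 0) (hinv : ∀ t, 0 ≤ t → Vinv (V t) = t)
    (ht : 0 < t) : HasDerivAt Vinv c⁻¹ (V t) :=
  (hV.to_local_left_inverse hc <|
    (eventually_gt_nhds ht).mono fun _ hy => hinv _ hy.le).hasDerivAt

theorem hasDerivAt_partial_left {f : ℝ → ℝ → ℝ}
    (hf : Differentiable ℝ fun p : ℝ × ℝ => f p.1 p.2) (x t : ℝ) :
    HasDerivAt (fun y => f y t) (deriv (fun y => f y t) x) x :=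
  (hf.comp (differentiable_id.prodMk (differentiable_const t)) x).hasDerivAt

theorem hasDerivAt_partial_right {f : ℝ → ℝ → ℝ}
    (hf : Differentiable ℝ fun p : ℝ × ℝ => f p.1 p.2) (x t : ℝ) :
    HasDerivAt (fun s => f x s) (deriv (fun s => f x s) t) t :=
  (hf.comp ((differentiable_const x).prodMk differentiable_id) t).hasDerivAt

theorem stmt9 (q : ℝ) (hq : 0 < q) (v : ℝ → ℝ) (r : ℝ → ℝ → ℝ)
    (hv : Continuous v) (hvpos : ∀ t, 0 < v t)
    (V : ℝ → ℝ) (hV : ∀ t, V t = ∫ τ in (0:ℝ)..t, v τ)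
    (Vinv : ℝ → ℝ) (hinv₁ : ∀ t, 0 ≤ t → Vinv (V t) = t)
    (hinv₂ : ∀ s, 0 ≤ s → V (Vinv s) = s)
    (g : ℝ → ℝ) (hg : Differentiable ℝ g) (hgq : ∀ s, 0 ≤ s → 0 < g s ∧ g s < q)
    (μ : ℝ → ℝ → ℝ) (hμdiff : Differentiable ℝ fun p : ℝ × ℝ => μ p.1 p.2)
    (hμpde : ∀ x t, deriv (fun s => μ x s) t + v t * deriv (fun y => μ y t) x = r x t * q)
    (hμ0 : ∀ t, μ 0 t = 0)
    (u₂ : ℝ → ℝ → ℝ)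
    (hu₂ : ∀ x t, u₂ x t =
      q * g (Vinv (V t - x)) /
        (g (Vinv (V t - x)) + (q - g (Vinv (V t - x))) * Real.exp (-(μ x t)))) :
    (∀ x t, 0 < x → x < V t →
      deriv (fun s => u₂ x s) t + v t * deriv (fun y => u₂ y t) x
        = r x t * (q - u₂ x t) * u₂ x t) ∧
    (∀ t, 0 ≤ t → u₂ 0 t = g t) := by
  have hV' : V = fun t => ∫ τ in (0:ℝ)..t, v τ := funext hV
  have hVd : ∀ t, HasStrictDerivAt V (v t) t := fun t => hV' ▸ hv.integral_hasStrictDerivAt 0 t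
  have hu : ∀ x t, u₂ x t = logistic q (g (Vinv (V t - x))) (μ x t) := hu₂
  refine ⟨fun x t hx hxV => ?_, fun t ht => by rw [hu, sub_zero, hinv₁ t ht, hμ0, logistic_zero hq.ne']⟩
  set t₀ := Vinv (V t - x)
  have hVt₀ : V t₀ = V t - x := hinv₂ _ (by linarith)
  have ht₀ : 0 < t₀ := by
    have hV0 : V 0 < V t₀ := by rw [hVt₀, hV 0, intervalIntegral.integral_same]; linarith
    exact (hV' ▸ strictMono_integral_of_pos hv hvpos).lt_iff_lt.mp hV0
  have hW : HasDerivAt (g ∘ Vinv) (deriv g t₀ * (v t₀)⁻¹) (V t - x) :=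
    (hg t₀).hasDerivAt.comp _ (hVt₀ ▸ hasDerivAt_leftInverse_of_pos (hVd t₀) (hvpos t₀).ne' hinv₁ ht₀)
  have hAt : HasDerivAt (fun s => g (Vinv (V s - x))) (deriv g t₀ * (v t₀)⁻¹ * v t) t :=
    HasDerivAt.comp (h₂ := g ∘ Vinv) t hW ((hVd t).hasDerivAt.sub_const x)
  have hAx : HasDerivAt (fun y => g (Vinv (V t - y))) (deriv g t₀ * (v t₀)⁻¹ * -1) x :=
    HasDerivAt.comp (h₂ := g ∘ Vinv) x hW ((hasDerivAt_id x).const_sub (V t))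
  have hD := (logistic_denom_pos (hgq t₀ ht₀.le).1 (hgq t₀ ht₀.le).2 (μ x t)).ne'
  have hut := hAt.logistic hq.ne' (hasDerivAt_partial_right hμdiff x t) hD
  have hux := hAx.logistic hq.ne' (hasDerivAt_partial_left hμdiff x t) hD
  simp only [hu] at hut hux ⊢
  rw [hut.deriv, hux.deriv]
  field_simp
  linear_combination (q - logistic q (g t₀) (μ x t)) * logistic q (g t₀) (μ x t) * hμpde x t
end

section
/- Let q : ℝ → ℝ be differentiable with q > 0, and let φ, Z₁, v, r be as in Theorem 2(i): φ differentiable with 0 < φ(y) < q(y), V(t) = ∫₀ᵗ v, and Z₁ differentiable satisfying ∂Z₁/∂t + v(t)∂Z₁/∂x = q(x)r(x,t) + r(x,t)·φ(y₁)·(q(x) − q(y₁))/(q(y₁) − φ(y₁))·e^{Z₁(x,t)} with Z₁(x,0) = 0, where y₁ = x − V(t). Then u₁(x,t) = q(y₁)φ(y₁)/(φ(y₁) + (q(y₁) − φ(y₁))e^{−Z₁(x,t)}) satisfies ∂u₁/∂t + v(t)∂u₁/∂x = r(x,t)(q(x) − u₁)u₁ and u₁(x,0) = φ(x). -/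
/-!
Along a characteristic `s ↦ x + V s - V t` the foot point `y₁ = x - V t` is constant, so `u₁`
restricted to it is the logistic curve with capacity `q(y₁)` and initial value `φ(y₁)`, evaluated
at the characteristic values of `Z₁`. A logistic curve `L` satisfies `L' = L (1 - L / K)`; the
exponential correction in the equation for `Z₁` converts the capacity `K = q(y₁)` into the local
capacity `q(x)`, which is the logistic equation of the statement.
-/

open Real

noncomputable section

def logisticCurve (K u₀ z : ℝ) : ℝ := K * u₀ / (u₀ + (K - u₀) * exp (-z))

theorem logisticCurve_zero {K : ℝ} (u₀ : ℝ) (hK : K ≠ 0) : logisticCurve K u₀ 0 = u₀ := by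
  rw [logisticCurve, neg_zero, exp_zero, mul_one, add_sub_cancel, mul_div_cancel_left₀ u₀ hK]

section

variable {K u₀ : ℝ}

theorem logisticCurve_denom_pos (hu₀ : 0 < u₀) (hK : u₀ < K) (z : ℝ) :
    0 < u₀ + (K - u₀) * exp (-z) :=
  add_pos hu₀ (mul_pos (sub_pos.2 hK) (exp_pos _))

theorem hasDerivAt_logisticCurve (hu₀ : 0 < u₀) (hK : u₀ < K) (z : ℝ) :
    HasDerivAt (logisticCurve K u₀)
      (logisticCurve K u₀ z * (1 - logisticCurve K u₀ z / K)) z := by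
  have hD := (logisticCurve_denom_pos hu₀ hK z).ne'
  have hK0 : K ≠ 0 := (hu₀.trans hK).ne'
  have hden : HasDerivAt (fun z => u₀ + (K - u₀) * exp (-z)) ((K - u₀) * (exp (-z) * -1)) z :=
    ((hasDerivAt_neg z).exp.const_mul (K - u₀)).const_add u₀
  refine ((hasDerivAt_const z (K * u₀)).div hden hD).congr_deriv ?_
  unfold logisticCurve
  field_simp
  ring

theorem hasDerivAt_logisticCurve_comp (hu₀ : 0 < u₀) (hK : u₀ < K) {k r z : ℝ} {ζ : ℝ → ℝ}
    {t : ℝ} (hζt : ζ t = z)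
    (hζ : HasDerivAt ζ (k * r + r * u₀ * (k - K) / (K - u₀) * exp z) t) :
    HasDerivAt (fun s => logisticCurve K u₀ (ζ s))
      (r * (k - logisticCurve K u₀ z) * logisticCurve K u₀ z) t := by
  subst hζt
  refine ((hasDerivAt_logisticCurve hu₀ hK (ζ t)).comp t hζ).congr_deriv ?_
  have hD := (logisticCurve_denom_pos hu₀ hK (ζ t)).ne'
  have hK0 : K ≠ 0 := (hu₀.trans hK).ne'
  have hKu₀ : K - u₀ ≠ 0 := (sub_pos.2 hK).ne'
  unfold logisticCurve
  rw [show exp (ζ t) = (exp (-ζ t))⁻¹ by rw [exp_neg, inv_inv]]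
  have hE := (exp_pos (-ζ t)).ne'
  field_simp
  ring

theorem DifferentiableAt.logisticCurve {E : Type*} [NormedAddCommGroup E] [NormedSpace ℝ E]
    {K u₀ z : E → ℝ} {p : E} (hK : DifferentiableAt ℝ K p) (hu₀ : DifferentiableAt ℝ u₀ p)
    (hz : DifferentiableAt ℝ z p) (hpos : 0 < u₀ p) (hlt : u₀ p < K p) :
    DifferentiableAt ℝ (fun p => _root_.logisticCurve (K p) (u₀ p) (z p)) p := by
  unfold _root_.logisticCurve
  fun_prop (disch := exact (logisticCurve_denom_pos hpos hlt (z p)).ne')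

end

theorem hasDerivAt_along_characteristic {f : ℝ → ℝ → ℝ} {V : ℝ → ℝ} {x t c : ℝ}
    (hf : DifferentiableAt ℝ (fun p : ℝ × ℝ => f p.1 p.2) (x, t)) (hV : HasDerivAt V c t) :
    HasDerivAt (fun s => f (x + V s - V t) s)
      (deriv (fun s => f x s) t + c * deriv (fun y => f y t) x) t := by
  set L := fderiv ℝ (fun p : ℝ × ℝ => f p.1 p.2) (x, t)
  have hL := hf.hasFDerivAt
  have hx : deriv (fun y => f y t) x = L (1, 0) :=
    (hL.comp_hasDerivAt (f := fun y => (y, t)) x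
      ((hasDerivAt_id x).prodMk (hasDerivAt_const x t))).deriv
  have ht : deriv (fun s => f x s) t = L (0, 1) :=
    (hL.comp_hasDerivAt (f := fun s => (x, s)) t
      ((hasDerivAt_const t x).prodMk (hasDerivAt_id t))).deriv
  have hcurve : HasDerivAt (fun s => (x + V s - V t, s)) (c, 1) t :=
    ((hV.const_add x).sub_const (V t)).prodMk (hasDerivAt_id t)
  have hdir : ((c, 1) : ℝ × ℝ) = c • ((1, 0) : ℝ × ℝ) + (0, 1) := by simp
  rw [hx, ht, add_comm, ← smul_eq_mul, ← map_smul, ← map_add, ← hdir]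
  exact hL.comp_hasDerivAt_of_eq t hcurve (by simp)

theorem stmt13_general (q : ℝ → ℝ) (hqdiff : Differentiable ℝ q) (hqpos : ∀ x, 0 < q x)
    (v : ℝ → ℝ) (r : ℝ → ℝ → ℝ) (hv : Continuous v)
    (φ : ℝ → ℝ) (hφ : Differentiable ℝ φ) (hφq : ∀ y, 0 < φ y ∧ φ y < q y)
    (V : ℝ → ℝ) (hV : ∀ t, V t = ∫ τ in (0:ℝ)..t, v τ)
    (Z₁ : ℝ → ℝ → ℝ) (hZdiff : Differentiable ℝ fun p : ℝ × ℝ => Z₁ p.1 p.2)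
    (hZpde : ∀ x t, deriv (fun s => Z₁ x s) t + v t * deriv (fun y => Z₁ y t) x
      = q x * r x t + r x t * φ (x - V t) * (q x - q (x - V t)) /
          (q (x - V t) - φ (x - V t)) * Real.exp (Z₁ x t))
    (hZ0 : ∀ x, Z₁ x 0 = 0)
    (u₁ : ℝ → ℝ → ℝ)
    (hu₁ : ∀ x t, u₁ x t = q (x - V t) * φ (x - V t) /
      (φ (x - V t) + (q (x - V t) - φ (x - V t)) * Real.exp (-(Z₁ x t)))) :
    (∀ x t, deriv (fun s => u₁ x s) t + v t * deriv (fun y => u₁ y t) x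
        = r x t * (q x - u₁ x t) * u₁ x t) ∧
    (∀ x, u₁ x 0 = φ x) := by
  have hu : ∀ x t, u₁ x t = logisticCurve (q (x - V t)) (φ (x - V t)) (Z₁ x t) := hu₁
  have hVderiv : ∀ t, HasDerivAt V (v t) t := fun t => by
    rw [funext hV]
    exact intervalIntegral.integral_hasDerivAt_right (hv.intervalIntegrable _ _)
      (hv.stronglyMeasurableAtFilter _ _) hv.continuousAt
  have hVdiff : Differentiable ℝ V := fun t => (hVderiv t).differentiableAt
  refine ⟨fun x t => ?_, fun x => ?_⟩
  · have hfoot : ∀ s, x + V s - V t - V s = x - V t := fun s => by ring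
    have hu_diff : DifferentiableAt ℝ (fun p : ℝ × ℝ => u₁ p.1 p.2) (x, t) := by
      simp only [hu]
      exact DifferentiableAt.logisticCurve (by fun_prop) (by fun_prop) (hZdiff _)
        (hφq _).1 (hφq _).2
    have hZ := hasDerivAt_along_characteristic (hZdiff (x, t)) (hVderiv t)
    rw [hZpde] at hZ
    have hu_ode := hasDerivAt_logisticCurve_comp (hφq (x - V t)).1 (hφq (x - V t)).2
      (by simp) hZ
    have hu_char : (fun s => u₁ (x + V s - V t) s)
        = fun s => logisticCurve (q (x - V t)) (φ (x - V t)) (Z₁ (x + V s - V t) s) :=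
      funext fun s => by rw [hu, hfoot]
    rw [← hu_char, ← hu] at hu_ode
    exact (hasDerivAt_along_characteristic hu_diff (hVderiv t)).unique hu_ode
  · rw [hu, hV 0, intervalIntegral.integral_same, sub_zero, hZ0, logisticCurve_zero _ (hqpos x).ne']

theorem stmt13 (q : ℝ → ℝ) (hqdiff : Differentiable ℝ q) (hqpos : ∀ x, 0 < q x)
    (v : ℝ → ℝ) (r : ℝ → ℝ → ℝ) (hv : Continuous v)
    (hr : Continuous fun p : ℝ × ℝ => r p.1 p.2)
    (φ : ℝ → ℝ) (hφ : Differentiable ℝ φ) (hφq : ∀ y, 0 < φ y ∧ φ y < q y)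
    (V : ℝ → ℝ) (hV : ∀ t, V t = ∫ τ in (0:ℝ)..t, v τ)
    (Z₁ : ℝ → ℝ → ℝ) (hZdiff : Differentiable ℝ fun p : ℝ × ℝ => Z₁ p.1 p.2)
    (hZpde : ∀ x t, deriv (fun s => Z₁ x s) t + v t * deriv (fun y => Z₁ y t) x
      = q x * r x t + r x t * φ (x - V t) * (q x - q (x - V t)) /
          (q (x - V t) - φ (x - V t)) * Real.exp (Z₁ x t))
    (hZ0 : ∀ x, Z₁ x 0 = 0)
    (u₁ : ℝ → ℝ → ℝ)
    (hu₁ : ∀ x t, u₁ x t = q (x - V t) * φ (x - V t) /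
      (φ (x - V t) + (q (x - V t) - φ (x - V t)) * Real.exp (-(Z₁ x t)))) :
    (∀ x t, deriv (fun s => u₁ x s) t + v t * deriv (fun y => u₁ y t) x
        = r x t * (q x - u₁ x t) * u₁ x t) ∧
    (∀ x, u₁ x 0 = φ x) :=
  stmt13_general q hqdiff hqpos v r hv φ hφ hφq V hV Z₁ hZdiff hZpde hZ0 u₁ hu₁
end
end
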